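/- Let 𝔞 be abelian in Sym(V) with weights α_1,...,α_n in an orthonormal eigenbasis v_1,...,v_n, A = exp(𝔞) acting on ℙ(V), with projective gradient map μ̃_𝔞([x])(ξ) = ⟨ξx,x⟩/‖x‖². For [x] ∈ ℙ(V) with representative x̃ of support I, the image μ̃_𝔞(closure(A·[x])) equals the polytope P_I = Conv{α_i : i ∈ I}. -/

import Mathlib

open RealInnerProductSpace Finset Classical

/-!
In the eigenbasis the normalized orbit point of `ξ` has squared coordinates proportional to
`⟪x, v i⟫² e^{2 α_i ξ}`, so along the orbit `μ̃` is the softmax average `∑ p_i(2ξ) α_i`, the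
gradient of `ξ ↦ log ∑ ⟪x, v i⟫² e^{α_i ξ}` at `2ξ`. These averages lie in the compact polytope
`P_I`. Conversely, for `φ = ∑ t_i α_i ∈ P_I` the function `G ξ = log ∑ ⟪x, v i⟫² e^{(α_i - φ) ξ}`
is bounded below, because `α_i ξ ≥ φ ξ` for some `i` in the support of `t`; a minimizer of
`G + ε ‖·‖` has `‖dG‖ ≤ ε`, and `dG` is the softmax average minus `φ`. So `P_I` is the closure of
`μ̃` of the orbit, and since the closed orbit is compact this is also `μ̃` of its closure.
-/

open Set Filter Topology

theorem ContinuousLinearMap.exp_apply_of_apply_eq_smul {E : Type*} [NormedAddCommGroup E]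
    [NormedSpace ℝ E] [CompleteSpace E] {A : E →L[ℝ] E} {a : ℝ} {w : E} (h : A w = a • w) :
    NormedSpace.exp A w = Real.exp a • w := by
  have hpow : ∀ k : ℕ, (A ^ k) w = a ^ k • w := by
    intro k
    induction k with
    | zero => simp
    | succ k ih => rw [pow_succ', mul_apply_eq_comp, ih, map_smul, h, smul_smul, pow_succ]
  have hA := (NormedSpace.exp_series_hasSum_exp' (𝕂 := ℝ) A).mapL
    (ContinuousLinearMap.apply ℝ E w)
  have ha := (NormedSpace.exp_series_hasSum_exp' (𝕂 := ℝ) a).smul_const w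
  rw [← Real.exp_eq_exp_ℝ] at ha
  refine hA.unique ?_
  simpa [hpow, smul_smul] using ha

namespace OrthonormalBasis

variable {ι V : Type*} [Fintype ι] [NormedAddCommGroup V] [InnerProductSpace ℝ V]
  (v : OrthonormalBasis ι ℝ V) {T : V →L[ℝ] V} {c : ι → ℝ}

theorem inner_apply_of_apply_eq_smul (hT : ∀ i, T (v i) = c i • v i) (i : ι) (y : V) :
    ⟪v i, T y⟫ = c i * ⟪v i, y⟫ := by
  conv_lhs => rw [← v.sum_repr' y]
  simp only [map_sum, map_smul, hT, smul_smul, v.orthonormal.inner_right_fintype]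
  ring

theorem inner_exp_apply_of_apply_eq_smul [CompleteSpace V] (hT : ∀ i, T (v i) = c i • v i)
    (i : ι) (y : V) : ⟪v i, NormedSpace.exp T y⟫ = Real.exp (c i) * ⟪v i, y⟫ :=
  v.inner_apply_of_apply_eq_smul (fun i => ContinuousLinearMap.exp_apply_of_apply_eq_smul (hT i))
    i y

theorem inner_apply_self_of_apply_eq_smul (hT : ∀ i, T (v i) = c i • v i) (y : V) :
    ⟪T y, y⟫ = ∑ i, c i * ⟪v i, y⟫ ^ 2 := by
  rw [← v.sum_inner_mul_inner]
  refine Finset.sum_congr rfl fun i _ => ?_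
  rw [real_inner_comm, v.inner_apply_of_apply_eq_smul hT]
  ring

theorem inner_apply_self_div_norm_sq (hT : ∀ i, T (v i) = c i • v i) (y : V) :
    ⟪T y, y⟫ / ‖y‖ ^ 2 = ∑ i, (⟪v i, y⟫ ^ 2 / ∑ j, ⟪v j, y⟫ ^ 2) * c i := by
  rw [v.inner_apply_self_of_apply_eq_smul hT, ← v.sum_sq_inner_right, Finset.sum_div]
  exact Finset.sum_congr rfl fun i _ => by ring

end OrthonormalBasis

noncomputable def softmax {ι : Type*} [Fintype ι] (b f : ι → ℝ) (i : ι) : ℝ :=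
  b i * Real.exp (f i) / ∑ j, b j * Real.exp (f j)

section Softmax

variable {ι : Type*} [Fintype ι] {b t : ι → ℝ}

theorem sum_mul_exp_pos (hb : ∀ i, 0 ≤ b i) (hb₀ : ∃ i, 0 < b i) (f : ι → ℝ) :
    0 < ∑ i, b i * Real.exp (f i) := by
  obtain ⟨i, hi⟩ := hb₀
  exact Finset.sum_pos' (fun j _ => mul_nonneg (hb j) (Real.exp_pos _).le)
    ⟨i, mem_univ i, by positivity⟩

theorem softmax_nonneg (hb : ∀ i, 0 ≤ b i) (f : ι → ℝ) (i : ι) : 0 ≤ softmax b f i :=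
  div_nonneg (mul_nonneg (hb i) (Real.exp_pos _).le)
    (Finset.sum_nonneg fun j _ => mul_nonneg (hb j) (Real.exp_pos _).le)

theorem sum_softmax (hb : ∀ i, 0 ≤ b i) (hb₀ : ∃ i, 0 < b i) (f : ι → ℝ) :
    ∑ i, softmax b f i = 1 := by
  simp only [softmax, ← Finset.sum_div]
  exact div_self (sum_mul_exp_pos hb hb₀ f).ne'

theorem softmax_eq_zero_of_eq_zero (f : ι → ℝ) {i : ι} (hi : b i = 0) : softmax b f i = 0 := by
  simp [softmax, hi]

theorem softmax_sub_const (f : ι → ℝ) (r : ℝ) : softmax b (fun i => f i - r) = softmax b f := by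
  funext i
  simp only [softmax, Real.exp_sub, mul_div_assoc', ← Finset.sum_div]
  rw [div_div_div_cancel_right₀ (Real.exp_pos r).ne']

theorem sq_div_sum_sq_eq_softmax (c f : ι → ℝ) {r : ℝ} (hr : r ≠ 0) (i : ι) :
    (r * (Real.exp (f i) * c i)) ^ 2 / ∑ j, (r * (Real.exp (f j) * c j)) ^ 2 =
      softmax (fun j => c j ^ 2) (fun j => 2 * f j) i := by
  have hsq : ∀ j, (r * (Real.exp (f j) * c j)) ^ 2 = r ^ 2 * (c j ^ 2 * Real.exp (2 * f j)) := by
    intro j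
    rw [two_mul, Real.exp_add]
    ring
  simp only [softmax, hsq, ← Finset.mul_sum]
  exact mul_div_mul_left _ _ (pow_ne_zero 2 hr)

theorem exists_ne_zero_and_sum_mul_le (ht : ∀ i, 0 ≤ t i) (h1 : ∑ i, t i = 1) (f : ι → ℝ) :
    ∃ j, t j ≠ 0 ∧ ∑ i, t i * f i ≤ f j := by
  by_contra! h
  obtain ⟨j, -, hj⟩ := Finset.exists_ne_zero_of_sum_ne_zero (h1.trans_ne one_ne_zero)
  have hlt : ∑ i, t i * f i < ∑ i, t i * ∑ k, t k * f k := by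
    refine Finset.sum_lt_sum (fun i _ => ?_) ⟨j, mem_univ j, ?_⟩
    · rcases eq_or_ne (t i) 0 with hi | hi
      · simp [hi]
      · exact mul_le_mul_of_nonneg_left (h i hi).le (ht i)
    · exact mul_lt_mul_of_pos_left (h j hj) ((ht j).lt_of_ne' hj)
  rw [← Finset.sum_mul, h1, one_mul] at hlt
  exact lt_irrefl _ hlt

theorem neg_sum_abs_log_le_log_sum_mul_exp (hb : ∀ i, 0 ≤ b i) (ht : ∀ i, 0 ≤ t i)
    (htb : ∀ i, b i = 0 → t i = 0) (h1 : ∑ i, t i = 1) (f : ι → ℝ) :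
    -∑ i, |Real.log (b i)| ≤ Real.log (∑ i, b i * Real.exp (f i - ∑ j, t j * f j)) := by
  obtain ⟨j, htj, hj⟩ := exists_ne_zero_and_sum_mul_le ht h1 f
  have hbj : 0 < b j := (hb j).lt_of_ne' fun h => htj (htb j h)
  calc -∑ i, |Real.log (b i)| ≤ -|Real.log (b j)| :=
        neg_le_neg (Finset.single_le_sum (f := fun i => |Real.log (b i)|)
          (fun i _ => abs_nonneg _) (mem_univ j))
    _ ≤ Real.log (b j) := neg_abs_le _
    _ ≤ Real.log (b j * Real.exp (f j - ∑ i, t i * f i)) :=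
        Real.log_le_log hbj (le_mul_of_one_le_right hbj.le (Real.one_le_exp (sub_nonneg.2 hj)))
    _ ≤ Real.log (∑ i, b i * Real.exp (f i - ∑ j, t j * f j)) :=
        Real.log_le_log (by positivity) (Finset.single_le_sum
          (f := fun i => b i * Real.exp (f i - ∑ j, t j * f j))
          (fun i _ => mul_nonneg (hb i) (Real.exp_pos _).le) (mem_univ j))

end Softmax

section Gradient

variable {E : Type*} [NormedAddCommGroup E] [NormedSpace ℝ E]

theorem hasFDerivAt_log_sum_mul_exp {ι : Type*} [Fintype ι] {b : ι → ℝ} (hb : ∀ i, 0 ≤ b i)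
    (hb₀ : ∃ i, 0 < b i) (a : ι → E →L[ℝ] ℝ) (ξ : E) :
    HasFDerivAt (fun ξ => Real.log (∑ i, b i * Real.exp (a i ξ)))
      (∑ i, softmax b (fun j => a j ξ) i • a i) ξ := by
  have hsum : HasFDerivAt (fun ξ => ∑ i, b i * Real.exp (a i ξ))
      (∑ i, (b i * Real.exp (a i ξ)) • a i) ξ := by
    refine HasFDerivAt.fun_sum fun i _ => ?_
    simpa [smul_smul] using ((a i).hasFDerivAt.exp).const_mul (b i)
  convert hsum.log (sum_mul_exp_pos hb hb₀ _).ne' using 1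
  simp only [softmax, Finset.smul_sum, smul_smul, div_eq_inv_mul]

variable {G : E → ℝ} {ε : ℝ}

theorem neg_fderiv_apply_le_of_forall_le_add_norm (hε : 0 ≤ ε) {p : E}
    (hG : DifferentiableAt ℝ G p) (hmin : ∀ q, G p + ε * ‖p‖ ≤ G q + ε * ‖q‖) (u : E) :
    -fderiv ℝ G p u ≤ ε * ‖u‖ := by
  set g : ℝ → ℝ := fun t => G (p + t • u) + ε * ‖u‖ * t
  have hg : HasDerivAt g (fderiv ℝ G p u + ε * ‖u‖) 0 := by
    have hline : HasDerivAt (fun t : ℝ => p + t • u) u 0 :=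
      ((hasDerivAt_id 0).smul_const u).const_add p |>.congr_deriv (one_smul ℝ u)
    have := (hG.hasFDerivAt.comp_hasDerivAt_of_eq (0 : ℝ) hline (by simp)).add
      ((hasDerivAt_id 0).const_mul (ε * ‖u‖))
    rw [mul_one] at this
    exact this
  have hgmin : IsMinOn g (Ici 0) 0 := fun t (ht : 0 ≤ t) => by
    have hq := hmin (p + t • u)
    have htri := norm_add_le p (t • u)
    rw [norm_smul, Real.norm_of_nonneg ht] at htri
    simp only [g, zero_smul, add_zero, mul_zero, mem_ofPred_eq]
    nlinarith
  have := hgmin.localize.hasFDerivWithinAt_nonneg hg.hasDerivWithinAt.hasFDerivWithinAt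
    (y := 1) (mem_posTangentConeAt_of_segment_subset (by simp [Set.Icc_subset_Ici_self]))
  simp only [ContinuousLinearMap.toSpanSingleton_apply, smul_eq_mul, one_mul] at this
  linarith

/-- A weak form of Ekeland's variational principle. -/
theorem exists_norm_fderiv_le_of_bddBelow [ProperSpace E] (hG : Differentiable ℝ G)
    (hbdd : BddBelow (range G)) (hε : 0 < ε) : ∃ p, ‖fderiv ℝ G p‖ ≤ ε := by
  obtain ⟨m, hm⟩ := hbdd
  have hcoercive : Tendsto (fun q => G q + ε * ‖q‖) (cocompact E) atTop :=
    tendsto_atTop_add_left_of_le _ m (fun q => hm ⟨q, rfl⟩)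
      (tendsto_norm_cocompact_atTop.const_mul_atTop hε)
  obtain ⟨p, hp⟩ := (hG.continuous.add (continuous_const.mul continuous_norm)).exists_forall_le
    hcoercive
  refine ⟨p, ContinuousLinearMap.opNorm_le_bound _ hε.le fun u => abs_le.2 ⟨?_, ?_⟩⟩
  · linarith [neg_fderiv_apply_le_of_forall_le_add_norm hε.le (hG p) hp u]
  · simpa using neg_fderiv_apply_le_of_forall_le_add_norm hε.le (hG p) hp (-u)

end Gradient

section SoftmaxAverage

variable {E ι : Type*} [NormedAddCommGroup E] [NormedSpace ℝ E] [ProperSpace E] [Fintype ι]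
  {b : ι → ℝ}

theorem exists_tendsto_sum_softmax_smul (hb : ∀ i, 0 ≤ b i) (hb₀ : ∃ i, 0 < b i)
    (a : ι → E →L[ℝ] ℝ) {t : ι → ℝ} (ht : ∀ i, 0 ≤ t i) (htb : ∀ i, b i = 0 → t i = 0)
    (h1 : ∑ i, t i = 1) :
    ∃ p : ℕ → E, Tendsto (fun k => ∑ i, softmax b (fun j => a j (p k)) i • a i) atTop
      (𝓝 (∑ i, t i • a i)) := by
  set φ := ∑ i, t i • a i
  set G : E → ℝ := fun ξ => Real.log (∑ i, b i * Real.exp ((a i - φ) ξ))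
  have hG : ∀ ξ, HasFDerivAt G (∑ i, softmax b (fun j => a j ξ) i • a i - φ) ξ := by
    intro ξ
    convert hasFDerivAt_log_sum_mul_exp hb hb₀ (fun i => a i - φ) ξ using 1
    simp only [sub_apply, softmax_sub_const (fun j => a j ξ), smul_sub,
      Finset.sum_sub_distrib, ← Finset.sum_smul, sum_softmax hb hb₀, one_smul]
  have hbdd : BddBelow (range G) := by
    refine ⟨-∑ i, |Real.log (b i)|, ?_⟩
    rintro _ ⟨ξ, rfl⟩
    simpa [G, φ] using neg_sum_abs_log_le_log_sum_mul_exp hb ht htb h1 (fun i => a i ξ)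
  choose p hp using fun k : ℕ => exists_norm_fderiv_le_of_bddBelow
    (fun ξ => (hG ξ).differentiableAt) hbdd (Nat.one_div_pos_of_nat (n := k))
  refine ⟨p, tendsto_iff_norm_sub_tendsto_zero.2 <|
    squeeze_zero (fun _ => norm_nonneg _) (fun k => ?_) tendsto_one_div_add_atTop_nhds_zero_nat⟩
  rw [← (hG (p k)).fderiv]
  exact hp k

theorem closure_range_sum_softmax_mul (hb : ∀ i, 0 ≤ b i) (hb₀ : ∃ i, 0 < b i)
    (a : ι → E →L[ℝ] ℝ) :
    closure (range fun ξ u => ∑ i, softmax b (fun j => a j ξ) i * a i u) =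
      (fun t u => ∑ i, t i * a i u) '' (stdSimplex ℝ ι ∩ {t | ∀ i, b i = 0 → t i = 0}) := by
  apply Set.Subset.antisymm
  · have hface : IsCompact (stdSimplex ℝ ι ∩ {t | ∀ i, b i = 0 → t i = 0}) := by
      refine (isCompact_stdSimplex ℝ ι).inter_right ?_
      simp only [ofPred_forall]
      exact isClosed_iInter fun i => isClosed_iInter fun _ =>
        isClosed_eq (continuous_apply i) continuous_const
    refine closure_minimal ?_ (hface.image (by fun_prop)).isClosed
    rintro _ ⟨ξ, rfl⟩
    exact ⟨_, ⟨⟨softmax_nonneg hb _, sum_softmax hb hb₀ _⟩,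
      fun i => softmax_eq_zero_of_eq_zero _⟩, rfl⟩
  · rintro _ ⟨t, ⟨⟨ht, h1⟩, htb⟩, rfl⟩
    obtain ⟨p, hp⟩ := exists_tendsto_sum_softmax_smul hb hb₀ a ht htb h1
    have hlim : Tendsto (fun k u => ∑ i, softmax b (fun j => a j (p k)) i * a i u) atTop
        (𝓝 fun u => ∑ i, t i * a i u) := tendsto_pi_nhds.2 fun u => by
      simpa [Function.comp_def] using
        ((ContinuousLinearMap.apply ℝ ℝ u).continuous.tendsto _).comp hp
    exact mem_closure_of_tendsto hlim (Eventually.of_forall fun k => mem_range_self (p k))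

end SoftmaxAverage

/-- The closure of the projective orbit `A·[x]` is represented by the closure of the normalized
orbit in the unit sphere. -/
theorem projective_gradientMap_image_closure_orbit_general
    (V : Type*) [NormedAddCommGroup V] [InnerProductSpace ℝ V] [FiniteDimensional ℝ V]
    (n : ℕ) (𝔞 : Submodule ℝ (V →L[ℝ] V))
    (v : OrthonormalBasis (Fin n) ℝ V) (α : Fin n → (𝔞 →ₗ[ℝ] ℝ))
    (heig : ∀ (ξ : 𝔞) (i : Fin n), (ξ : V →L[ℝ] V) (v i) = α i ξ • v i)
    (x : V) (hx : x ≠ 0)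
    (μ : V → 𝔞 → ℝ)
    (hμ : ∀ (y : V) (ξ : 𝔞), μ y ξ = ⟪(ξ : V →L[ℝ] V) y, y⟫ / (‖y‖ ^ 2)) :
    μ '' closure {y : V | ∃ ξ : 𝔞,
        y = ‖NormedSpace.exp (ξ : V →L[ℝ] V) x‖⁻¹ • NormedSpace.exp (ξ : V →L[ℝ] V) x} =
      {φ : 𝔞 → ℝ | ∃ s : Fin n → ℝ, (∀ i, 0 ≤ s i) ∧ (∀ i, ⟪x, v i⟫ = 0 → s i = 0) ∧
        (∑ i, s i = 1) ∧ φ = fun ξ : 𝔞 => ∑ i, s i * α i ξ} := by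
  obtain rfl : μ = fun y (ξ : 𝔞) => ⟪(ξ : V →L[ℝ] V) y, y⟫ / ‖y‖ ^ 2 := funext₂ hμ
  set b : Fin n → ℝ := fun i => ⟪x, v i⟫ ^ 2
  have hb₀ : ∃ i, 0 < b i := by
    have hsum : ∑ _i : Fin n, (0 : ℝ) < ∑ i, b i := by
      simpa [b, v.sum_sq_inner_left] using pow_pos (norm_pos_iff.2 hx) 2
    simpa using Finset.exists_lt_of_sum_lt hsum
  set orbit : 𝔞 → V := fun ξ =>
    ‖NormedSpace.exp (ξ : V →L[ℝ] V) x‖⁻¹ • NormedSpace.exp (ξ : V →L[ℝ] V) x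
  have hcoord : ∀ (ξ : 𝔞) i,
      ⟪v i, NormedSpace.exp (ξ : V →L[ℝ] V) x⟫ = Real.exp (α i ξ) * ⟪x, v i⟫ := fun ξ i => by
    rw [v.inner_exp_apply_of_apply_eq_smul (heig ξ), real_inner_comm]
  have hexp_ne : ∀ ξ : 𝔞, NormedSpace.exp (ξ : V →L[ℝ] V) x ≠ 0 := fun ξ h0 => by
    obtain ⟨i, hi⟩ := hb₀
    have := hcoord ξ i
    simp only [h0, inner_zero_right, zero_eq_mul, Real.exp_ne_zero, false_or] at this
    simp [b, this] at hi
  have hsphere : closure (range orbit) ⊆ Metric.sphere 0 1 :=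
    closure_minimal (range_subset_iff.2 fun ξ => by
      simpa [orbit] using norm_smul_inv_norm (𝕜 := ℝ) (hexp_ne ξ)) Metric.isClosed_sphere
  have hcont : ContinuousOn (fun y (ξ : 𝔞) => ⟪(ξ : V →L[ℝ] V) y, y⟫ / ‖y‖ ^ 2)
      (Metric.sphere 0 1) :=
    continuousOn_pi.2 fun ξ => ContinuousOn.div (by fun_prop) (by fun_prop) fun y hy => by
      simp [mem_sphere_zero_iff_norm.1 hy]
  set a : Fin n → 𝔞 →L[ℝ] ℝ := fun i => (α i).toContinuousLinearMap
  have hμorbit : (fun y (η : 𝔞) => ⟪(η : V →L[ℝ] V) y, y⟫ / ‖y‖ ^ 2) ∘ orbit =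
      (fun ξ u => ∑ i, softmax b (fun j => a j ξ) i * a i u) ∘ fun ξ => (2 : ℝ) • ξ := by
    funext ξ η
    simp only [Function.comp_apply, v.inner_apply_self_div_norm_sq (heig η)]
    refine Finset.sum_congr rfl fun i _ => ?_
    simp only [orbit, a, inner_smul_right, hcoord, LinearMap.coe_toContinuousLinearMap',
      map_smul, smul_eq_mul]
    congr 1
    exact sq_div_sum_sq_eq_softmax (fun j => ⟪x, v j⟫) (fun j => α j ξ)
      (inv_ne_zero (norm_ne_zero_iff.2 (hexp_ne ξ))) i
  have hsurj : Function.Surjective fun ξ : 𝔞 => (2 : ℝ) • ξ := fun η =>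
    ⟨(2 : ℝ)⁻¹ • η, by simp [smul_smul]⟩
  have horbit : {y | ∃ ξ : 𝔞, y = orbit ξ} = range orbit := by
    ext
    simp [eq_comm]
  rw [horbit, image_closure_of_isCompact
    ((isCompact_sphere 0 1).of_isClosed_subset isClosed_closure hsphere) (hcont.mono hsphere),
    ← range_comp, hμorbit, hsurj.range_comp,
    closure_range_sum_softmax_mul (E := 𝔞) (b := b) (fun i => sq_nonneg _) hb₀ a]
  ext φ
  simp only [mem_image, mem_inter_iff, stdSimplex, mem_ofPred_eq, b, a,
    pow_eq_zero_iff two_ne_zero, LinearMap.coe_toContinuousLinearMap']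
  constructor
  · rintro ⟨t, ⟨⟨ht, h1⟩, htb⟩, rfl⟩
    exact ⟨t, ht, htb, h1, rfl⟩
  · rintro ⟨t, ht, htb, h1, rfl⟩
    exact ⟨t, ⟨⟨ht, h1⟩, htb⟩, rfl⟩

/-- The projective gradient map `μ̃_𝔞([y])(ξ) = ⟪ξy,y⟫/‖y‖²` maps the closure of the projective
orbit `A·[x]` (represented by the closure of the normalized orbit on the unit sphere) onto the
polytope `P_I = Conv{α_i : i ∈ supp x}`. -/
theorem projective_gradientMap_image_closure_orbit
    (V : Type*) [NormedAddCommGroup V] [InnerProductSpace ℝ V] [FiniteDimensional ℝ V]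
    (n : ℕ) (𝔞 : Submodule ℝ (V →L[ℝ] V))
    (habelian : ∀ ξ η : 𝔞, (ξ : V →L[ℝ] V) * η = (η : V →L[ℝ] V) * ξ)
    (v : OrthonormalBasis (Fin n) ℝ V) (α : Fin n → (𝔞 →ₗ[ℝ] ℝ))
    (heig : ∀ (ξ : 𝔞) (i : Fin n), (ξ : V →L[ℝ] V) (v i) = α i ξ • v i)
    (x : V) (hx : x ≠ 0)
    (μ : V → 𝔞 → ℝ)
    (hμ : ∀ (y : V) (ξ : 𝔞), μ y ξ = ⟪(ξ : V →L[ℝ] V) y, y⟫ / (‖y‖ ^ 2)) :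
    μ '' closure {y : V | ∃ ξ : 𝔞,
        y = ‖NormedSpace.exp (ξ : V →L[ℝ] V) x‖⁻¹ • NormedSpace.exp (ξ : V →L[ℝ] V) x} =
      {φ : 𝔞 → ℝ | ∃ s : Fin n → ℝ, (∀ i, 0 ≤ s i) ∧ (∀ i, ⟪x, v i⟫ = 0 → s i = 0) ∧
        (∑ i, s i = 1) ∧ φ = fun ξ : 𝔞 => ∑ i, s i * α i ξ} :=
  projective_gradientMap_image_closure_orbit_general V n 𝔞 v α heig x hx μ hμ
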